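/- Let t ≥ 1 be an integer and consider two alternatives located at the real numbers 0 and 2 on the line, with 2t agents, of which t are said to prefer alternative 0 (rank 0 as farthest) and t are said to prefer alternative 2 (rank 2 as farthest). For each choice of winner c ∈ {0, 2}, letting c' denote the other alternative, there exists an assignment of real positions to the agents that is consistent with the preferences (every agent preferring 0 is at a point p with |p − 0| ≥ |p − 2|, and every agent preferring 2 is at a point p with |p − 2| ≥ |p − 0|) such that Σ_{agents} |p − c'| = 3 · Σ_{agents} |p − c|. Consequently, any mechanism that sees only the ordinal preferences of the agents over the two alternatives has distortion at least 3. -/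
import Mathlib


/-- With two alternatives at 0 and 2 on the line, `t` agents preferring
(i.e., ranking farthest) alternative 0 and `t` agents preferring alternative 2, for any
choice of winner `c ∈ {0,2}` there are agent positions consistent with the preferences
under which the other alternative has social welfare exactly 3 times that of `c`.
Hence any ordinal mechanism has distortion at least 3. -/
theorem ordinal_centralized_lower_bound_three
    (t : ℕ) (ht : 1 ≤ t) (c c' : ℝ)
    (hcc' : (c = 0 ∧ c' = 2) ∨ (c = 2 ∧ c' = 0)) :
    ∃ p0 p2 : Fin t → ℝ,
      (∀ i, |p0 i - 2| ≤ |p0 i - 0|) ∧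
      (∀ i, |p2 i - 0| ≤ |p2 i - 2|) ∧
      ((∑ i, |p0 i - c'|) + (∑ i, |p2 i - c'|) =
        3 * ((∑ i, |p0 i - c|) + (∑ i, |p2 i - c|))) := by
  rcases hcc' with ⟨hc, hc'⟩ | ⟨hc, hc'⟩
  · refine ⟨fun _ => 1, fun _ => 0, ?_, ?_, ?_⟩
    · intro i; norm_num
    · intro i; norm_num
    · subst hc hc'
      simp [Finset.sum_const, abs_of_nonneg, abs_of_nonpos]
      ring
  · refine ⟨fun _ => 2, fun _ => 1, ?_, ?_, ?_⟩
    · intro i; norm_num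
    · intro i; norm_num
    · subst hc hc'
      simp [Finset.sum_const, abs_of_nonneg, abs_of_nonpos]
      ring
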